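/- arXiv:2412.10963 — 2 statements merged into one kernel-verified Lean document; each statement's English description precedes it below -/
import Mathlib

section
/- Let f : E ⟶ X be a bundle scenario with X connected, E partitioned into summands F^{(i)}, i ∈ Fin m (each F^{(i)} closed under the structure maps of E, levelwise pairwise disjoint with union E), and let p be a simplicial distribution on f, with component masses λ_i := Σ_{e ∈ F^{(i)}_n} p_x(e) (independent of the simplex x) and, for λ_i ≠ 0, restrictions p|_{F^{(i)}} defined by (p|_{F^{(i)}})_x(e) = p_x(e)/λ_i for e ∈ F^{(i)}_n. Then p is noncontextual if and only if p|_{F^{(i)}} is noncontextual (as a simplicial distribution on the restricted map f|_{F^{(i)}} : F^{(i)} ⟶ X) for every i with λ_i ≠ 0. -/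
open CategoryTheory Simplicial Opposite
open scoped NNReal BigOperators

universe u

/-- A distribution on a type `S`: a finitely supported function to `ℝ≥0` with total sum 1. -/
structure FDist (S : Type u) : Type u where
  toFun : S → ℝ≥0
  finite_support : (Function.support toFun).Finite
  sum_one : ∑ᶠ s, toFun s = 1

/-- `f : E ⟶ X` is a bundle scenario if it is surjective in each degree. -/
def IsBundle {E X : SSet.{u}} (f : E ⟶ X) : Prop :=
  ∀ n : ℕ, Function.Surjective (f.app (op ⦋n⦌))

/-- A simplicial distribution on a simplicial map `f : E ⟶ X`. -/
structure BDist {E X : SSet.{u}} (f : E ⟶ X) : Type u where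
  d : ∀ n : ℕ, X _⦋n⦌ → FDist (E _⦋n⦌)
  supp : ∀ (n : ℕ) (x : X _⦋n⦌) (e : E _⦋n⦌), f.app (op ⦋n⦌) e ≠ x → (d n x).toFun e = 0
  compat : ∀ {k n : ℕ} (α : (⦋k⦌ : SimplexCategory) ⟶ ⦋n⦌) (x : X _⦋n⦌) (e : E _⦋k⦌),
    (d k (X.map α.op x)).toFun e = ∑ᶠ e' ∈ {e' : E _⦋n⦌ | E.map α.op e' = e}, (d n x).toFun e'

/-- A family of levelwise subsets closed under the structure maps. -/
def ClosedUnder (E : SSet.{u}) (F : ∀ n : ℕ, Set (E _⦋n⦌)) : Prop :=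
  ∀ ⦃k n : ℕ⦄ (α : (⦋k⦌ : SimplexCategory) ⟶ ⦋n⦌) (e : E _⦋n⦌), e ∈ F n → E.map α.op e ∈ F k

/-- A summand of a simplicial set: the family and its levelwise complement are both closed
under the structure maps. -/
def IsSummand (E : SSet.{u}) (F : ∀ n : ℕ, Set (E _⦋n⦌)) : Prop :=
  ClosedUnder E F ∧ ClosedUnder E fun n => (F n)ᶜ

/-- The edge relation on vertices of a simplicial set. -/
def EdgeRel (X : SSet.{u}) (a b : X _⦋0⦌) : Prop :=
  ∃ σ : X _⦋1⦌, X.δ 1 σ = a ∧ X.δ 0 σ = b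

/-- A simplicial set is connected if any two vertices are related by the equivalence
relation generated by the edge relation. -/
def SConnected (X : SSet.{u}) : Prop :=
  ∀ a b : X _⦋0⦌, Relation.EqvGen (EdgeRel X) a b

/-- The sub-simplicial set spanned by a closed family of levelwise subsets. -/
def SubSSet (E : SSet.{u}) (F : ∀ n : ℕ, Set (E _⦋n⦌)) (hF : ClosedUnder E F) : SSet.{u} where
  obj U := {e : E.obj U // e ∈ F U.unop.len}
  map {U V} α := TypeCat.ofHom fun e =>
    ⟨E.map α e.1, hF (k := V.unop.len) (n := U.unop.len) α.unop e.1 e.2⟩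
  map_id U := by
    refine ConcreteCategory.hom_ext _ _ fun e => ?_
    exact Subtype.ext (congrArg (fun g => g e.1) (E.map_id U))
  map_comp α β := by
    refine ConcreteCategory.hom_ext _ _ fun e => ?_
    exact Subtype.ext (congrArg (fun g => g e.1) (E.map_comp α β))

/-- The inclusion of a sub-simplicial set. -/
def subIncl (E : SSet.{u}) (F : ∀ n : ℕ, Set (E _⦋n⦌)) (hF : ClosedUnder E F) :
    SubSSet E F hF ⟶ E where
  app U := TypeCat.ofHom fun e => e.1
  naturality := by intros; rfl

/-- The sections of a simplicial map `f : E ⟶ X`. -/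
def Sections {E X : SSet.{u}} (f : E ⟶ X) : Type u :=
  {s : X ⟶ E // s ≫ f = 𝟙 X}

/-- A simplicial distribution on a bundle is noncontextual if it is a mixture of
(deterministic distributions associated with) sections of the bundle. -/
def BNoncontextual {E X : SSet.{u}} {f : E ⟶ X} (p : BDist f) : Prop :=
  ∃ Q : FDist (Sections f), ∀ (n : ℕ) (x : X _⦋n⦌) (e : E _⦋n⦌),
    (p.d n x).toFun e = ∑ᶠ s ∈ setOf (fun s : Sections f => s.1.app (op ⦋n⦌) x = e), Q.toFun s

/-- A vertex (extreme point) of the convex set of simplicial distributions on a bundle. -/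
def BIsVertex {E X : SSet.{u}} {f : E ⟶ X} (p : BDist f) : Prop :=
  ∀ (q q' : BDist f) (t : ℝ), 0 < t → t < 1 →
    (∀ (n : ℕ) (x : X _⦋n⦌) (e : E _⦋n⦌),
      ((p.d n x).toFun e : ℝ) = t * ((q.d n x).toFun e : ℝ) + (1 - t) * ((q'.d n x).toFun e : ℝ)) →
    q = q'

/-!
Over a connected base, a section of `f` takes all its values in one summand: membership in a
summand is invariant under the structure maps, and any two vertices are joined by a zigzag of
edges. Hence the sections of `f` are the disjoint union of the sections of the restrictions
`f|F⁽ⁱ⁾`. A mixture `Q` of sections of `f` representing `p` splits into its parts on the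
summands, the part on `F⁽ⁱ⁾` having mass `λᵢ`; conversely, mixtures representing the
`p|F⁽ⁱ⁾`, weighted by the `λᵢ`, glue to a mixture representing `p`.
-/

open Function Set

theorem finsum_finsum_mem_fiber {α β M : Type*} [AddCommMonoid M] (g : α → β) {Q : α → M}
    (hQ : (support Q).Finite) : ∑ᶠ b, ∑ᶠ a ∈ {a | g a = b}, Q a = ∑ᶠ a, Q a := by
  classical
  simp_rw [finsum_mem_eq_sum_filter Q _ hQ, mem_ofPred_eq]
  rw [finsum_sum_filter g, finsum_eq_sum Q hQ]

namespace Sections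

variable {E X : SSet.{u}} (f : E ⟶ X)

noncomputable def evalMass (w : Sections f → ℝ≥0) {n : ℕ} (x : X _⦋n⦌) (e : E _⦋n⦌) : ℝ≥0 :=
  ∑ᶠ s ∈ {s | s.1.app (op ⦋n⦌) x = e}, w s

theorem finsum_evalMass {w : Sections f → ℝ≥0} (hw : (support w).Finite) {n : ℕ}
    (x : X _⦋n⦌) : ∑ᶠ e, evalMass f w x e = ∑ᶠ s, w s :=
  finsum_finsum_mem_fiber _ hw

variable {F : ∀ n : ℕ, Set (E _⦋n⦌)} (hF : ClosedUnder E F)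

def incl (t : Sections (subIncl E F hF ≫ f)) : Sections f :=
  ⟨t.1 ≫ subIncl E F hF, by rw [Category.assoc, t.2]⟩

theorem incl_injective : Injective (incl f hF) := fun _ _ h =>
  Subtype.ext <| NatTrans.ext <| funext fun U => ConcreteCategory.hom_ext _ _ fun x =>
    Subtype.ext <| congr_arg (fun φ : X ⟶ E => φ.app U x) (congrArg Subtype.val h)

def restrict (s : Sections f) (hs : ∀ (n : ℕ) (x : X _⦋n⦌), s.1.app (op ⦋n⦌) x ∈ F n) :
    Sections (subIncl E F hF ≫ f) :=
  ⟨{ app := fun U => TypeCat.ofHom fun x => ⟨s.1.app U x, hs U.unop.len x⟩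
     naturality := fun _ _ g => ConcreteCategory.hom_ext _ _ fun x =>
       Subtype.ext (NatTrans.naturality_apply s.1 g x) },
   NatTrans.ext <| funext fun U => ConcreteCategory.hom_ext _ _ fun x =>
     congr_arg (fun φ : X ⟶ X => φ.app U x) s.2⟩

theorem incl_restrict (s : Sections f)
    (hs : ∀ (n : ℕ) (x : X _⦋n⦌), s.1.app (op ⦋n⦌) x ∈ F n) :
    incl f hF (restrict f hF s hs) = s :=
  rfl

end Sections

namespace IsSummand

variable {E X : SSet.{u}} {F : ∀ n : ℕ, Set (E _⦋n⦌)}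

theorem map_mem_iff (hF : IsSummand E F) {k n : ℕ} (α : (⦋k⦌ : SimplexCategory) ⟶ ⦋n⦌)
    (e : E _⦋n⦌) : E.map α.op e ∈ F k ↔ e ∈ F n :=
  ⟨not_imp_not.mp (hF.2 α e), hF.1 α e⟩

theorem app_map_mem_iff (hF : IsSummand E F) (s : X ⟶ E) {k n : ℕ}
    (α : (⦋k⦌ : SimplexCategory) ⟶ ⦋n⦌) (x : X _⦋n⦌) :
    s.app (op ⦋k⦌) (X.map α.op x) ∈ F k ↔ s.app (op ⦋n⦌) x ∈ F n := by
  rw [NatTrans.naturality_apply]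
  exact hF.map_mem_iff α _

theorem app_mem_iff_of_connected (hF : IsSummand E F) (hX : SConnected X) (s : X ⟶ E)
    {n k : ℕ} (x : X _⦋n⦌) (y : X _⦋k⦌) : s.app (op ⦋n⦌) x ∈ F n ↔ s.app (op ⦋k⦌) y ∈ F k := by
  have hvertex (a b : X _⦋0⦌) : s.app (op ⦋0⦌) a ∈ F 0 ↔ s.app (op ⦋0⦌) b ∈ F 0 := by
    induction hX a b with
    | rel a b hab =>
      obtain ⟨σ, rfl, rfl⟩ := hab
      exact (hF.app_map_mem_iff s _ σ).trans (hF.app_map_mem_iff s _ σ).symm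
    | refl => rfl
    | symm _ _ _ ih => exact ih.symm
    | trans _ _ _ _ _ ih₁ ih₂ => exact ih₁.trans ih₂
  rw [← hF.app_map_mem_iff s (SimplexCategory.const _ _ 0) x,
    ← hF.app_map_mem_iff s (SimplexCategory.const _ _ 0) y]
  exact hvertex _ _

theorem mem_range_incl (hF : IsSummand E F) (hX : SConnected X) (f : E ⟶ X) {s : Sections f}
    {k : ℕ} {y : X _⦋k⦌} (hy : s.1.app (op ⦋k⦌) y ∈ F k) : s ∈ range (Sections.incl f hF.1) :=
  ⟨Sections.restrict f hF.1 s fun _ x => (hF.app_mem_iff_of_connected hX s.1 y x).mp hy,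
    Sections.incl_restrict ..⟩

theorem evalMass_eq (hF : IsSummand E F) (hX : SConnected X) (f : E ⟶ X)
    (w : Sections f → ℝ≥0) {n : ℕ} (x : X _⦋n⦌) {e : E _⦋n⦌} (he : e ∈ F n) :
    Sections.evalMass f w x e = Sections.evalMass _ (w ∘ Sections.incl f hF.1) x ⟨e, he⟩ := by
  have hfiber : ({s | s.1.app (op ⦋n⦌) x = e} : Set (Sections f)) =
      Sections.incl f hF.1 '' {t | t.1.app (op ⦋n⦌) x = ⟨e, he⟩} := by
    ext s
    constructor
    · intro hs
      obtain ⟨t, rfl⟩ := hF.mem_range_incl hX f (hs ▸ he : s.1.app (op ⦋n⦌) x ∈ F n)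
      exact ⟨t, Subtype.ext hs, rfl⟩
    · rintro ⟨t, ht, rfl⟩
      exact congrArg Subtype.val ht
  rw [Sections.evalMass, hfiber, finsum_mem_image (Sections.incl_injective f hF.1).injOn]
  rfl

end IsSummand

section Partition

variable {E X : SSet.{u}} {ι : Type*} {F : ι → ∀ n : ℕ, Set (E _⦋n⦌)}

theorem isSummand_of_iUnion_eq_univ (hcl : ∀ i, ClosedUnder E (F i))
    (hdisj : ∀ n : ℕ, Pairwise fun i j => Disjoint (F i n) (F j n))
    (hun : ∀ n : ℕ, (⋃ i, F i n) = univ) (i : ι) : IsSummand E (F i) := by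
  refine ⟨hcl i, fun k n α e he hαe => ?_⟩
  obtain ⟨j, hj⟩ := mem_iUnion.mp (hun n ▸ mem_univ e : e ∈ ⋃ j, F j n)
  have hij : i ≠ j := by rintro rfl; exact he hj
  exact (hdisj k hij).le_bot ⟨hαe, hcl j α e hj⟩

theorem Sections.bijective_sigma_incl [Nonempty (X _⦋0⦌)] (hX : SConnected X) (f : E ⟶ X)
    (hcl : ∀ i, ClosedUnder E (F i))
    (hdisj : ∀ n : ℕ, Pairwise fun i j => Disjoint (F i n) (F j n))
    (hun : ∀ n : ℕ, (⋃ i, F i n) = univ) :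
    Bijective fun t : Σ i, Sections (subIncl E (F i) (hcl i) ≫ f) =>
      Sections.incl f (hcl t.1) t.2 := by
  obtain ⟨x₀⟩ := ‹Nonempty (X _⦋0⦌)›
  constructor
  · rintro ⟨i, t⟩ ⟨j, t'⟩ h
    obtain rfl : i = j := by
      by_contra hij
      have hx₀ : (t.1.app (op ⦋0⦌) x₀).1 = (t'.1.app (op ⦋0⦌) x₀).1 :=
        congr_arg (fun s : Sections f => s.1.app (op ⦋0⦌) x₀) h
      exact (hdisj 0 hij).le_bot ⟨(t.1.app (op ⦋0⦌) x₀).2, hx₀ ▸ (t'.1.app (op ⦋0⦌) x₀).2⟩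
    exact congrArg (Sigma.mk i) (Sections.incl_injective f (hcl i) h)
  · intro s
    obtain ⟨i, hi⟩ := mem_iUnion.mp (hun 0 ▸ mem_univ _ : s.1.app (op ⦋0⦌) x₀ ∈ ⋃ i, F i 0)
    obtain ⟨t, rfl⟩ :=
      (isSummand_of_iUnion_eq_univ hcl hdisj hun i).mem_range_incl hX f hi
    exact ⟨⟨i, t⟩, rfl⟩

theorem BNoncontextual.of_partition [Finite ι] [Nonempty (X _⦋0⦌)] (hX : SConnected X)
    (f : E ⟶ X) (hcl : ∀ i, ClosedUnder E (F i))
    (hdisj : ∀ n : ℕ, Pairwise fun i j => Disjoint (F i n) (F j n))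
    (hun : ∀ n : ℕ, (⋃ i, F i n) = univ) (p : BDist f)
    (hw : ∀ i, ∃ w : Sections (subIncl E (F i) (hcl i) ≫ f) → ℝ≥0, (support w).Finite ∧
      ∀ (n : ℕ) (x : X _⦋n⦌) (e : E _⦋n⦌) (he : e ∈ F i n),
        (p.d n x).toFun e = Sections.evalMass _ w x ⟨e, he⟩) :
    BNoncontextual p := by
  choose w hw_fin hpw using hw
  let φ := Equiv.ofBijective _ (Sections.bijective_sigma_incl hX f hcl hdisj hun)
  let W : (Σ i, Sections (subIncl E (F i) (hcl i) ≫ f)) → ℝ≥0 := fun t => w t.1 t.2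
  let Q := W ∘ φ.symm
  have hQ_incl (i : ι) : Q ∘ Sections.incl f (hcl i) = w i :=
    funext fun t => congrArg W (φ.symm_apply_apply ⟨i, t⟩)
  have hW_fin : (support W).Finite := by
    refine (finite_iUnion fun i => (hw_fin i).image (Sigma.mk i)).subset ?_
    rintro ⟨i, t⟩ ht
    exact mem_iUnion.mpr ⟨i, t, ht, rfl⟩
  have hQ_fin : (support Q).Finite := hW_fin.preimage φ.symm.injective.injOn
  have hpQ (n : ℕ) (x : X _⦋n⦌) (e : E _⦋n⦌) :
      (p.d n x).toFun e = Sections.evalMass f Q x e := by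
    obtain ⟨i, hi⟩ := mem_iUnion.mp (hun n ▸ mem_univ e : e ∈ ⋃ i, F i n)
    rw [(isSummand_of_iUnion_eq_univ hcl hdisj hun i).evalMass_eq hX f Q x hi, hQ_incl, hpw]
  obtain ⟨x₀⟩ := ‹Nonempty (X _⦋0⦌)›
  refine ⟨⟨Q, hQ_fin, ?_⟩, hpQ⟩
  rw [← Sections.finsum_evalMass f hQ_fin x₀, ← finsum_congr (hpQ 0 x₀), (p.d 0 x₀).sum_one]

end Partition

section Noncontextual

variable {E X : SSet.{u}} {f : E ⟶ X}

theorem BNoncontextual.of_isEmpty (hX₀ : IsEmpty (X _⦋0⦌)) (p : BDist f) : BNoncontextual p := by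
  have hX (U : SimplexCategoryᵒᵖ) : IsEmpty (X.obj U) :=
    ⟨fun x => hX₀.elim (X.map (SimplexCategory.const ⦋0⦌ U.unop 0).op x)⟩
  let s : Sections f :=
    ⟨{ app := fun U => TypeCat.ofHom fun x => (hX U).elim x
       naturality := fun U _ _ => ConcreteCategory.hom_ext _ _ fun x => (hX U).elim x },
     NatTrans.ext <| funext fun U => ConcreteCategory.hom_ext _ _ fun x => (hX U).elim x⟩
  have : Unique (Sections f) :=
    { default := s
      uniq := fun t => Subtype.ext <| NatTrans.ext <| funext fun U =>
        ConcreteCategory.hom_ext _ _ fun x => (hX U).elim x }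
  exact ⟨⟨fun _ => 1, toFinite _, finsum_unique _⟩, fun n x => (hX _).elim x⟩

theorem BNoncontextual.restrict {F : ∀ n : ℕ, Set (E _⦋n⦌)} (hF : IsSummand E F)
    (hX : SConnected X) {p : BDist f} (hp : BNoncontextual p) {x₀ : X _⦋0⦌} {lam : ℝ≥0}
    (hlam : ∑ᶠ e ∈ F 0, (p.d 0 x₀).toFun e = lam) (hlam₀ : lam ≠ 0)
    (q : BDist (subIncl E F hF.1 ≫ f))
    (hq : ∀ (n : ℕ) (x : X _⦋n⦌) (e : E _⦋n⦌) (he : e ∈ F n),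
      (q.d n x).toFun ⟨e, he⟩ = (p.d n x).toFun e / lam) :
    BNoncontextual q := by
  obtain ⟨Q, hQ⟩ := hp
  let w := Q.toFun ∘ Sections.incl f hF.1
  have hw_fin : (support w).Finite :=
    Q.finite_support.preimage (Sections.incl_injective f hF.1).injOn
  have hpw (n : ℕ) (x : X _⦋n⦌) (e : E _⦋n⦌) (he : e ∈ F n) :
      (p.d n x).toFun e = Sections.evalMass _ w x ⟨e, he⟩ :=
    (hQ n x e).trans (hF.evalMass_eq hX f Q.toFun x he)
  have hw_sum : ∑ᶠ t, w t = lam :=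
    calc ∑ᶠ t, w t = ∑ᶠ e, Sections.evalMass _ w x₀ e :=
          (Sections.finsum_evalMass _ hw_fin x₀).symm
      _ = ∑ᶠ e : F 0, (p.d 0 x₀).toFun e := finsum_congr fun e => (hpw 0 x₀ e.1 e.2).symm
      _ = lam := (finsum_subtype_eq_finsum_cond _).trans hlam
  refine ⟨⟨fun t => lam⁻¹ * w t, hw_fin.subset fun t ht => right_ne_zero_of_mul ht, ?_⟩,
    fun n x e => ?_⟩
  · rw [← mul_finsum, hw_sum, inv_mul_cancel₀ hlam₀]
  · calc (q.d n x).toFun e = (p.d n x).toFun e.1 / lam := hq n x e.1 e.2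
      _ = lam⁻¹ * Sections.evalMass _ w x e := by rw [hpw n x e.1 e.2, div_eq_inv_mul]; rfl
      _ = _ := mul_finsum_mem _ _

theorem exists_weight_of_noncontextual_restrict {F : ∀ n : ℕ, Set (E _⦋n⦌)} (hF : ClosedUnder E F)
    (p : BDist f) {lam : ℝ≥0}
    (hlam : ∀ (n : ℕ) (x : X _⦋n⦌), ∑ᶠ e ∈ F n, (p.d n x).toFun e = lam)
    (q : lam ≠ 0 → BDist (subIncl E F hF ≫ f))
    (hq : ∀ (hlam₀ : lam ≠ 0) (n : ℕ) (x : X _⦋n⦌) (e : E _⦋n⦌) (he : e ∈ F n),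
      ((q hlam₀).d n x).toFun ⟨e, he⟩ = (p.d n x).toFun e / lam)
    (hq_nc : ∀ hlam₀, BNoncontextual (q hlam₀)) :
    ∃ w : Sections (subIncl E F hF ≫ f) → ℝ≥0, (support w).Finite ∧
      ∀ (n : ℕ) (x : X _⦋n⦌) (e : E _⦋n⦌) (he : e ∈ F n),
        (p.d n x).toFun e = Sections.evalMass _ w x ⟨e, he⟩ := by
  by_cases hlam₀ : lam = 0
  · refine ⟨0, by simp, fun n x e he => ?_⟩
    have hle : (p.d n x).toFun e ≤ lam := by
      rw [← hlam n x, finsum_mem_def, ← indicator_of_mem he (p.d n x).toFun]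
      refine single_le_finsum e ((p.d n x).finite_support.subset ?_) fun _ => zero_le
      rw [support_indicator]
      exact inter_subset_right
    simp [Sections.evalMass, le_antisymm (hlam₀ ▸ hle) zero_le]
  · obtain ⟨Q, hQ⟩ := hq_nc hlam₀
    refine ⟨fun t => lam * Q.toFun t,
      Q.finite_support.subset fun t ht => right_ne_zero_of_mul ht, fun n x e he => ?_⟩
    calc (p.d n x).toFun e = lam * ((q hlam₀).d n x).toFun ⟨e, he⟩ := by
          rw [hq hlam₀ n x e he, mul_div_cancel₀ _ hlam₀]
      _ = Sections.evalMass _ (fun t => lam * Q.toFun t) x ⟨e, he⟩ := by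
          exact (congrArg (lam * ·) (hQ n x ⟨e, he⟩)).trans (mul_finsum_mem _ _)

end Noncontextual

theorem stmt6_general {E X : SSet.{0}} (f : E ⟶ X) (hX : SConnected X)
    (m : ℕ) (F : Fin m → ∀ n : ℕ, Set (E _⦋n⦌))
    (hcl : ∀ i : Fin m, ClosedUnder E (F i))
    (hdisj : ∀ n : ℕ, Pairwise fun i j : Fin m => Disjoint (F i n) (F j n))
    (hun : ∀ n : ℕ, (⋃ i : Fin m, F i n) = Set.univ)
    (p : BDist f) (lam : Fin m → ℝ≥0)
    (hlam : ∀ (i : Fin m) (n : ℕ) (x : X _⦋n⦌), ∑ᶠ e ∈ F i n, (p.d n x).toFun e = lam i)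
    (pc : (i : Fin m) → lam i ≠ 0 → BDist (subIncl E (F i) (hcl i) ≫ f))
    (hpc : ∀ (i : Fin m) (hi : lam i ≠ 0) (n : ℕ) (x : X _⦋n⦌) (e : E _⦋n⦌) (he : e ∈ F i n),
      ((pc i hi).d n x).toFun ⟨e, he⟩ = (p.d n x).toFun e / lam i) :
    BNoncontextual p ↔ ∀ (i : Fin m) (hi : lam i ≠ 0), BNoncontextual (pc i hi) := by
  rcases isEmpty_or_nonempty (X _⦋0⦌) with hX₀ | hX₀
  · exact ⟨fun _ _ _ => .of_isEmpty hX₀ _, fun _ => .of_isEmpty hX₀ p⟩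
  constructor
  · obtain ⟨x₀⟩ := hX₀
    exact fun hp i hi => hp.restrict (isSummand_of_iUnion_eq_univ hcl hdisj hun i) hX
      (hlam i 0 x₀) hi (pc i hi) (hpc i hi)
  · exact fun h => .of_partition hX f hcl hdisj hun p fun i =>
      exists_weight_of_noncontextual_restrict (hcl i) p (hlam i) (pc i) (hpc i) (h i)

/-- Corollary 3.19: for a bundle scenario over a connected measurement space whose event
space is partitioned into summands, a simplicial distribution is noncontextual if and only
if each of its (normalized) restrictions to the summands with nonzero mass is
noncontextual. -/
theorem stmt6 {E X : SSet.{0}} (f : E ⟶ X) (hf : IsBundle f) (hX : SConnected X)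
    (m : ℕ) (F : Fin m → ∀ n : ℕ, Set (E _⦋n⦌))
    (hcl : ∀ i : Fin m, ClosedUnder E (F i))
    (hdisj : ∀ n : ℕ, Pairwise fun i j : Fin m => Disjoint (F i n) (F j n))
    (hun : ∀ n : ℕ, (⋃ i : Fin m, F i n) = Set.univ)
    (p : BDist f) (lam : Fin m → ℝ≥0)
    (hlam : ∀ (i : Fin m) (n : ℕ) (x : X _⦋n⦌), ∑ᶠ e ∈ F i n, (p.d n x).toFun e = lam i)
    (pc : (i : Fin m) → lam i ≠ 0 → BDist (subIncl E (F i) (hcl i) ≫ f))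
    (hpc : ∀ (i : Fin m) (hi : lam i ≠ 0) (n : ℕ) (x : X _⦋n⦌) (e : E _⦋n⦌) (he : e ∈ F i n),
      ((pc i hi).d n x).toFun ⟨e, he⟩ = (p.d n x).toFun e / lam i) :
    BNoncontextual p ↔ ∀ (i : Fin m) (hi : lam i ≠ 0), BNoncontextual (pc i hi) :=
  stmt6_general f hX m F hcl hdisj hun p lam hlam pc hpc
end

section
/- Let m be a positive integer and X a connected simplicial set. Fix simplices x₁,…,x_k of X (with x_t ∈ X_{n_t}), outcomes y_t : Fin(n_t + 1) → ZMod m, and real numbers B₁,…,B_k, R. If every noncontextual simplicial distribution p on (X, Δ_{Z_m}) satisfies Σ_t B_t · p_{x_t}(y_t) ≤ R, then every noncontextual simplicial distribution P on (X, ⊔_{Z_m} Δ_{Z_m}) satisfies, for every j ∈ ZMod m: Σ_t B_t · P_{x_t}(j, y_t) ≤ R · Σ_{y : Fin(n₁+1) → ZMod m} P_{x₁}(j, y). (Via the identification of sDist(X, ⊔_{Z_m} Δ_{Z_m}) with sDist(CX, Δ_{Z_m}), these are the Bell inequalities of the cone scenario produced from those of the original scenario (X, Δ_{Z_m}).) 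-/
/-!
On a connected `X` the copy index of a simplicial map `X ⟶ ⊔_{ℤ_m} Δ_{ℤ_m}` is constant along
edges, so the map factors through a single copy of `Δ_{ℤ_m}`. Hence, if `P = Θ(Q)`, then
`P_x(j, -)` is `Θ` applied to the part of `Q` on maps into copy `j`, pushed forward to maps
`X ⟶ Δ_{ℤ_m}`: a mixture of total mass `c = Σ_y P_{x₁}(j, y)`. Normalizing it gives a
noncontextual distribution on `(X, Δ_{ℤ_m})`, and its Bell inequality multiplied by `c` is the
claimed one (when `c = 0` both sides vanish).
-/

open CategoryTheory Simplicial Opposite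
open scoped NNReal BigOperators

universe u

/-- A simplicial distribution on the simplicial scenario `(X, Y)`. -/
structure SDist (X Y : SSet.{u}) : Type u where
  d : ∀ n : ℕ, X _⦋n⦌ → FDist (Y _⦋n⦌)
  compat : ∀ {k n : ℕ} (α : (⦋k⦌ : SimplexCategory) ⟶ ⦋n⦌) (x : X _⦋n⦌) (y : Y _⦋k⦌),
    (d k (X.map α.op x)).toFun y = ∑ᶠ y' ∈ {y' : Y _⦋n⦌ | Y.map α.op y' = y}, (d n x).toFun y'

/-- The simplicial set `Δ_{ℤ_m}` whose `n`-simplices are functions `Fin (n+1) → ZMod m`. -/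
def DeltaZ (m : ℕ) : SSet.{0} where
  obj U := Fin (U.unop.len + 1) → ZMod m
  map α := TypeCat.ofHom fun a => a ∘ α.unop.toOrderHom
  map_id := by intros; rfl
  map_comp := by intros; rfl

/-- The disjoint union `⊔_{ℤ_m} Δ_{ℤ_m}` of `m` copies of `Δ_{ℤ_m}`. -/
def DeltaZSum (m : ℕ) : SSet.{0} where
  obj U := ZMod m × (Fin (U.unop.len + 1) → ZMod m)
  map α := TypeCat.ofHom fun x => (x.1, x.2 ∘ α.unop.toOrderHom)
  map_id := by intros; rfl
  map_comp := by intros; rfl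

instance (m : ℕ) (U : SimplexCategoryᵒᵖ) : AddCommGroup ((DeltaZ m).obj U) :=
  Pi.addCommGroup

/-- A simplicial distribution is noncontextual if it is a mixture of deterministic
distributions. -/
def Noncontextual {X Y : SSet.{u}} (p : SDist X Y) : Prop :=
  ∃ Q : FDist (X ⟶ Y), ∀ (n : ℕ) (x : X _⦋n⦌) (y : Y _⦋n⦌),
    (p.d n x).toFun y = ∑ᶠ φ ∈ ({φ | φ.app (op ⦋n⦌) x = y} : Set (X ⟶ Y)), Q.toFun φ

/-- A vertex (extreme point) of the convex set of simplicial distributions. -/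
def IsVertex {X Y : SSet.{u}} (p : SDist X Y) : Prop :=
  ∀ (q q' : SDist X Y) (t : ℝ), 0 < t → t < 1 →
    (∀ (n : ℕ) (x : X _⦋n⦌) (y : Y _⦋n⦌),
      ((p.d n x).toFun y : ℝ) = t * ((q.d n x).toFun y : ℝ) + (1 - t) * ((q'.d n x).toFun y : ℝ)) →
    q = q'

/-- `q ⪯ p` : the support of `q` is contained in that of `p`. -/
def Pre {X Y : SSet.{u}} (q p : SDist X Y) : Prop :=
  ∀ (n : ℕ) (x : X _⦋n⦌) (y : Y _⦋n⦌), (q.d n x).toFun y ≠ 0 → (p.d n x).toFun y ≠ 0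

section FiberSum

variable {α β γ M : Type*} [AddCommMonoid M]

noncomputable def fiberSum (f : α → β) (g : α → M) (b : β) : M :=
  ∑ᶠ a ∈ {a | f a = b}, g a

lemma support_fiberSum_subset (f : α → β) (g : α → M) :
    Function.support (fiberSum f g) ⊆ f '' Function.support g := by
  intro b hb
  obtain ⟨a, ⟨rfl, ha⟩⟩ := exists_ne_zero_of_finsum_mem_ne_zero hb
  exact ⟨a, ha, rfl⟩

lemma finsum_fiberSum (f : α → β) {g : α → M} (hg : (Function.support g).Finite) :
    ∑ᶠ b, fiberSum f g b = ∑ᶠ a, g a := by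
  classical
  set s := hg.toFinset
  have hfib : ∀ b, fiberSum f g b = ∑ a ∈ s with f a = b, g a := fun b =>
    finsum_mem_eq_sum_of_inter_support_eq _ (by ext; simp [s, and_comm])
  rw [finsum_eq_sum_of_support_subset _ (s := s.image f) (by
      simpa [s] using support_fiberSum_subset f g),
    finsum_eq_sum_of_support_subset _ (s := s) (by simp [s])]
  simp_rw [hfib]
  exact Finset.sum_fiberwise_of_maps_to (fun a ha => Finset.mem_image_of_mem f ha) g

lemma fiberSum_fiberSum (f : α → β) (h : β → γ) {g : α → M} (hg : (Function.support g).Finite)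
    (c : γ) : fiberSum h (fiberSum f g) c = fiberSum (h ∘ f) g c := by
  set g' := {a | h (f a) = c}.indicator g
  have hg' : (Function.support g').Finite := by
    simpa only [g', Set.support_indicator] using hg.inter_of_right _
  have hfib : ∀ b, {b | h b = c}.indicator (fiberSum f g) b = fiberSum f g' b := by
    intro b
    by_cases hb : b ∈ {b | h b = c}
    · rw [Set.indicator_of_mem hb]
      refine finsum_mem_congr rfl fun a (ha : f a = b) => ?_
      exact (Set.indicator_of_mem (s := {a | h (f a) = c}) (by simpa [ha] using hb) g).symm
    · rw [Set.indicator_of_notMem hb]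
      refine (finsum_mem_eq_zero_of_forall_eq_zero fun a (ha : f a = b) => ?_).symm
      exact Set.indicator_of_notMem (s := {a | h (f a) = c}) (by simpa [ha] using hb) g
  rw [fiberSum, finsum_mem_def, finsum_congr hfib, finsum_fiberSum f hg', fiberSum,
    finsum_mem_def]
  rfl

lemma fiberSum_mul {R : Type*} [NonUnitalNonAssocSemiring R] [NoZeroDivisors R] (f : α → β)
    (g : α → R) (r : R) (b : β) : fiberSum f (fun a => r * g a) b = r * fiberSum f g b :=
  (mul_finsum_mem g r).symm

end FiberSum

namespace FDist

variable {α β : Type*}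

noncomputable def map (f : α → β) (Q : FDist α) : FDist β where
  toFun := fiberSum f Q.toFun
  finite_support := (Q.finite_support.image f).subset (support_fiberSum_subset f Q.toFun)
  sum_one := by rw [finsum_fiberSum f Q.finite_support, Q.sum_one]

noncomputable def normalize (w : α → ℝ≥0) (hw : (Function.support w).Finite)
    (hw0 : ∑ᶠ a, w a ≠ 0) : FDist α where
  toFun a := (∑ᶠ a, w a)⁻¹ * w a
  finite_support := hw.subset fun a ha => right_ne_zero_of_mul ha
  sum_one := by rw [← mul_finsum' _ _ hw, inv_mul_cancel₀ hw0]

end FDist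

/-- The simplicial distribution `Θ(Q)` of a distribution `Q` on simplicial maps. -/
noncomputable def SDist.ofMaps {X Y : SSet.{u}} (Q : FDist (X ⟶ Y)) : SDist X Y where
  d n x := Q.map fun φ => φ.app (op ⦋n⦌) x
  compat α x y := by
    have hnat : (fun φ : X ⟶ Y => φ.app (op ⦋_⦌) (X.map α.op x)) =
        Y.map α.op ∘ fun φ => φ.app (op ⦋_⦌) x :=
      funext fun φ => ConcreteCategory.congr_hom (φ.naturality α.op) x
    simp only [FDist.map, hnat]
    exact (fiberSum_fiberSum _ _ Q.finite_support y).symm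

lemma noncontextual_ofMaps {X Y : SSet.{u}} (Q : FDist (X ⟶ Y)) :
    Noncontextual (SDist.ofMaps Q) :=
  ⟨Q, fun _ _ _ => rfl⟩

/-- A Bell inequality is homogeneous: it holds, scaled by the total mass, for every finitely
supported nonnegative combination of simplicial maps. -/
theorem sum_mul_fiberSum_le_mul_finsum {X Y : SSet.{u}} {k : ℕ} {nn : Fin k → ℕ}
    (x : ∀ t, X _⦋nn t⦌) (y : ∀ t, Y _⦋nn t⦌) (B : Fin k → ℝ) (R : ℝ)
    (hBell : ∀ p : SDist X Y, Noncontextual p →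
      ∑ t : Fin k, B t * ((p.d (nn t) (x t)).toFun (y t) : ℝ) ≤ R)
    {w : (X ⟶ Y) → ℝ≥0} (hw : (Function.support w).Finite) :
    ∑ t : Fin k, B t * ((fiberSum (fun φ : X ⟶ Y => φ.app (op ⦋nn t⦌) (x t)) w (y t) : ℝ≥0) : ℝ)
      ≤ R * ∑ᶠ φ, w φ := by
  by_cases hw0 : ∑ᶠ φ, w φ = 0
  · have hzero : w = 0 := by
      rw [finsum_eq_sum w hw, Finset.sum_eq_zero_iff] at hw0
      exact funext fun φ => by_contra fun hφ => hφ (hw0 φ (hw.mem_toFinset.2 hφ))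
    simp [hzero, fiberSum]
  · set c := ∑ᶠ φ, w φ
    set p := SDist.ofMaps (FDist.normalize w hw hw0)
    have hscale : ∀ t,
        ((fiberSum (fun φ : X ⟶ Y => φ.app (op ⦋nn t⦌) (x t)) w (y t) : ℝ≥0) : ℝ) =
          c * (p.d (nn t) (x t)).toFun (y t) := by
      intro t
      simp only [p, SDist.ofMaps, FDist.map, FDist.normalize]
      rw [fiberSum_mul, ← NNReal.coe_mul, ← mul_assoc, mul_inv_cancel₀ hw0, one_mul]
    calc _ = c * ∑ t : Fin k, B t * ((p.d (nn t) (x t)).toFun (y t) : ℝ) := by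
          simp_rw [hscale, Finset.mul_sum, mul_left_comm]
      _ ≤ c * R := mul_le_mul_of_nonneg_left (hBell p (noncontextual_ofMaps _)) c.coe_nonneg
      _ = R * c := mul_comm _ _

lemma SConnected.apply_eq_apply {X : SSet.{u}} (hX : SConnected X) {S : Type*}
    (f : ∀ n : ℕ, X _⦋n⦌ → S)
    (hf : ∀ {k n : ℕ} (α : (⦋k⦌ : SimplexCategory) ⟶ ⦋n⦌) (z : X _⦋n⦌), f k (X.map α.op z) = f n z)
    {n n' : ℕ} (z : X _⦋n⦌) (z' : X _⦋n'⦌) : f n z = f n' z' := by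
  have hvert : ∀ a b : X _⦋0⦌, f 0 a = f 0 b := fun a b => by
    induction hX a b with
    | rel a b hab =>
      obtain ⟨σ, rfl, rfl⟩ := hab
      exact (hf _ σ).trans (hf _ σ).symm
    | refl => rfl
    | symm _ _ _ ih => exact ih.symm
    | trans _ _ _ _ _ ih₁ ih₂ => exact ih₁.trans ih₂
  rw [← hf (SimplexCategory.const ⦋0⦌ ⦋n⦌ 0) z, ← hf (SimplexCategory.const ⦋0⦌ ⦋n'⦌ 0) z']
  exact hvert _ _

def DeltaZSum.snd (m : ℕ) : DeltaZSum m ⟶ DeltaZ m where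
  app _ := TypeCat.ofHom Prod.snd

lemma SConnected.fst_app_eq {X : SSet.{0}} (hX : SConnected X) {m : ℕ} (φ : X ⟶ DeltaZSum m)
    {n n' : ℕ} (z : X _⦋n⦌) (z' : X _⦋n'⦌) :
    (φ.app (op ⦋n⦌) z).1 = (φ.app (op ⦋n'⦌) z').1 :=
  hX.apply_eq_apply (fun n z => (φ.app (op ⦋n⦌) z).1)
    (fun α z => congrArg Prod.fst (ConcreteCategory.congr_hom (φ.naturality α.op) z)) z z'


lemma SConnected.exists_fiberSum_eq_of_noncontextual {X : SSet.{0}} (hX : SConnected X) {m : ℕ}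
    {P : SDist X (DeltaZSum m)} (hP : Noncontextual P) (j : ZMod m) :
    ∃ w : (X ⟶ DeltaZ m) → ℝ≥0, (Function.support w).Finite ∧
      ∀ (n : ℕ) (z : X _⦋n⦌) (a : Fin (n + 1) → ZMod m),
        (P.d n z).toFun (j, a) = fiberSum (fun ψ : X ⟶ DeltaZ m => ψ.app (op ⦋n⦌) z) w a := by
  obtain ⟨Q, hQ⟩ := hP
  set S : Set (X ⟶ DeltaZSum m) := {φ | ∀ (n : ℕ) (z : X _⦋n⦌), (φ.app (op ⦋n⦌) z).1 = j}
  have hS : (Function.support (S.indicator Q.toFun)).Finite := by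
    simpa only [Set.support_indicator] using Q.finite_support.inter_of_right _
  refine ⟨fiberSum (· ≫ DeltaZSum.snd m) (S.indicator Q.toFun),
    (hS.image _).subset (support_fiberSum_subset _ _), fun n z a => ?_⟩
  refine (hQ n z (j, a)).trans (Eq.trans ?_ (fiberSum_fiberSum _ _ hS a).symm)
  rw [fiberSum, finsum_mem_def, finsum_mem_def, Set.indicator_indicator]
  refine finsum_congr fun φ => congrArg (Set.indicator · Q.toFun φ) (Set.ext fun φ => ?_)
  exact ⟨fun h => ⟨congrArg Prod.snd h,
      fun n' z' => (hX.fst_app_eq φ z' z).trans (congrArg Prod.fst h)⟩,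
    fun ⟨ha, hj⟩ => Prod.ext (hj n z) ha⟩

/-- Proposition 4.11: Bell inequalities for the cone scenario. Via the identification of
`sDist(CX, Δ_{ℤ_m})` with `sDist(X, ⊔_{ℤ_m} Δ_{ℤ_m})`, a Bell inequality
`Σ_t B_t p_{x_t}(y_t) ≤ R` of the scenario `(X, Δ_{ℤ_m})` induces, for every
`j ∈ ℤ_m`, the inequality `Σ_t B_t P_{x_t}(j, y_t) ≤ R · Σ_y P_{x₁}(j, y)` for
noncontextual simplicial distributions `P` on the cone scenario. -/
theorem stmt15 (m : ℕ) [NeZero m] (X : SSet.{0}) (hX : SConnected X)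
    (k : ℕ) (hk : 0 < k) (nn : Fin k → ℕ)
    (x : ∀ t : Fin k, X _⦋nn t⦌) (y : ∀ t : Fin k, Fin (nn t + 1) → ZMod m)
    (B : Fin k → ℝ) (R : ℝ)
    (hBell : ∀ p : SDist X (DeltaZ m), Noncontextual p →
      ∑ t : Fin k, B t * ((p.d (nn t) (x t)).toFun (y t) : ℝ) ≤ R) :
    ∀ P : SDist X (DeltaZSum m), Noncontextual P → ∀ j : ZMod m,
      ∑ t : Fin k, B t * ((P.d (nn t) (x t)).toFun (j, y t) : ℝ)
        ≤ R * ∑ a : Fin (nn ⟨0, hk⟩ + 1) → ZMod m,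
            ((P.d (nn ⟨0, hk⟩) (x ⟨0, hk⟩)).toFun (j, a) : ℝ) := by
  intro P hP j
  obtain ⟨w, hw, hPw⟩ := hX.exists_fiberSum_eq_of_noncontextual hP j
  have hmass : ∑ a : Fin (nn ⟨0, hk⟩ + 1) → ZMod m,
      ((P.d (nn ⟨0, hk⟩) (x ⟨0, hk⟩)).toFun (j, a) : ℝ) = ∑ᶠ ψ, w ψ := by
    rw [← NNReal.coe_sum, ← finsum_eq_sum_of_fintype]
    simp_rw [hPw]
    exact congrArg _ (finsum_fiberSum _ hw)
  simp_rw [hmass, hPw]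
  exact sum_mul_fiberSum_le_mul_finsum x y B R hBell hw
end
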